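/- arXiv:quant-ph/0509177 — 3 statements merged into one kernel-verified Lean document; each statement's English description precedes it below -/
import Mathlib

section
/- Let P be a projection-valued measure on a measurable space Q acting on a Hilbert space H, and let f : Q → ℝ be a bounded measurable function with G = ∫ f dP. Then the spectral projection-valued measure of G is given by P_G(B) = P(f⁻¹(B)) for Borel sets B ⊆ ℝ. -/
open scoped InnerProductSpace
open ContinuousLinearMap MeasureTheory

/-- A projection-valued measure (PVM) on a measurable space `Q`, acting on a complex
Hilbert space `H`: a family of self-adjoint, multiplicative projections indexed by
measurable sets, normalized on `Set.univ`, together with, for each vector `ψ`, the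
associated Borel measure `B ↦ ‖P(B)ψ‖²` (which encodes countable additivity). -/
structure PVM (Q : Type*) [MeasurableSpace Q] (H : Type*) [NormedAddCommGroup H]
    [InnerProductSpace ℂ H] [CompleteSpace H] where
  proj : Set Q → (H →L[ℂ] H)
  sa : ∀ B, MeasurableSet B → ContinuousLinearMap.adjoint (proj B) = proj B
  inter : ∀ B B', MeasurableSet B → MeasurableSet B' →
    proj (B ∩ B') = (proj B) ∘L (proj B')
  empty' : proj ∅ = 0
  univ' : proj Set.univ = 1
  μ : H → Measure Q
  μ_apply : ∀ (ψ : H) (B : Set Q), MeasurableSet B → μ ψ B = ENNReal.ofReal (‖proj B ψ‖ ^ 2)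

/-- `P.IntegralEq f G` says that `G = ∫ f dP`, expressed through the diagonal matrix
elements: `⟨ψ|G|ψ⟩ = ∫ f(q) μ^P_ψ(dq)` for all `ψ` (which determines `G` by
polarization). -/
def PVM.IntegralEq {Q : Type*} [MeasurableSpace Q] {H : Type*} [NormedAddCommGroup H]
    [InnerProductSpace ℂ H] [CompleteSpace H]
    (P : PVM Q H) (f : Q → ℝ) (G : H →L[ℂ] H) : Prop :=
  ∀ ψ : H, ⟪ψ, G ψ⟫_ℂ = ((∫ q, f q ∂(P.μ ψ) : ℝ) : ℂ)

/-- If `P` is a PVM on `Q`, `f : Q → ℝ` is bounded measurable and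
`G = ∫ f dP`, then the spectral projection-valued measure of `G` is given by
`P_G(B) = P(f⁻¹(B))` for Borel `B ⊆ ℝ`: that is, `B ↦ P(f⁻¹(B))` extends to a PVM on
`ℝ` whose integral of the identity function is `G`. -/
theorem stmt3
    {Q : Type*} [MeasurableSpace Q] {H : Type*} [NormedAddCommGroup H]
    [InnerProductSpace ℂ H] [CompleteSpace H]
    (P : PVM Q H) (f : Q → ℝ) (hf : Measurable f) (hbd : ∃ C, ∀ q, |f q| ≤ C)
    (G : H →L[ℂ] H) (hGsa : ContinuousLinearMap.adjoint G = G)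
    (hG : P.IntegralEq f G) :
    ∃ PG : PVM ℝ H,
      (∀ B : Set ℝ, MeasurableSet B → PG.proj B = P.proj (f ⁻¹' B)) ∧
      PG.IntegralEq id G := by
  refine ⟨⟨fun B => P.proj (f ⁻¹' B),
    fun B hB => P.sa _ (hf hB),
    fun B B' hB hB' => by
      rw [Set.preimage_inter]; exact P.inter _ _ (hf hB) (hf hB'),
    by simpa using P.empty',
    by simpa using P.univ',
    fun ψ => (P.μ ψ).map f,
    fun ψ B hB => by
      rw [Measure.map_apply hf hB, P.μ_apply ψ _ (hf hB)]⟩,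
    fun B hB => rfl, fun ψ => ?_⟩
  rw [hG ψ]
  congr 1
  simp only
  rw [integral_map hf.aemeasurable measurable_id.aestronglyMeasurable]
  rfl
end

section
/- Let H_I be a bounded self-adjoint operator and P a projection-valued measure on configuration space Q acting on the Hilbert space. Then the following are equivalent: (i) for all unit vectors ψ and all measurable sets B, B' ⊆ Q, Im⟨ψ|P(B) H_I P(B')|ψ⟩ = 0; (ii) [H_I, P(B)] = 0 for all measurable B ⊆ Q. -/
open scoped InnerProductSpace
open ContinuousLinearMap MeasureTheory

/-!
Taking `B = Q` in (i), the operator `H_I P(B')` has real expectation values, so it is self-adjoint;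
its adjoint is `P(B') H_I`, which is the commutation relation. Conversely, if `H_I` commutes with
the projections, then `P(B) H_I P(B') = P(B ∩ B') H_I` is a product of commuting self-adjoint
operators, hence self-adjoint, and its expectation values are real.
-/

namespace ContinuousLinearMap

variable {V : Type*} [NormedAddCommGroup V] [InnerProductSpace ℂ V]

theorem im_inner_map_self_eq_zero_of_norm_eq_one (T : V →L[ℂ] V)
    (hT : ∀ ψ : V, ‖ψ‖ = 1 → (⟪ψ, T ψ⟫_ℂ).im = 0) (ψ : V) : (⟪ψ, T ψ⟫_ℂ).im = 0 := by
  rcases eq_or_ne ψ 0 with rfl | hψ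
  · simp
  have hnorm : ‖ψ‖ ≠ 0 := norm_ne_zero_iff.mpr hψ
  set u : V := (‖ψ‖⁻¹ : ℂ) • ψ
  have hu : ‖u‖ = 1 := by simp [u, norm_smul, hnorm]
  have hψu : ψ = (‖ψ‖ : ℂ) • u := by
    simp only [u, smul_smul]
    rw [mul_inv_cancel₀ (by exact_mod_cast hnorm), one_smul]
  have hscale : ⟪ψ, T ψ⟫_ℂ = ((‖ψ‖ ^ 2 : ℝ) : ℂ) * ⟪u, T u⟫_ℂ := by
    conv_lhs => rw [hψu]
    rw [map_smul, inner_smul_left, inner_smul_right, Complex.conj_ofReal]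
    push_cast
    ring
  rw [hscale, Complex.im_ofReal_mul, hT u hu, mul_zero]

variable [CompleteSpace V]

theorem isSelfAdjoint_iff_im_inner_map_self_eq_zero (T : V →L[ℂ] V) :
    IsSelfAdjoint T ↔ ∀ ψ : V, (⟪ψ, T ψ⟫_ℂ).im = 0 := by
  simp only [isSelfAdjoint_iff_isSymmetric, LinearMap.isSymmetric_iff_inner_map_self_real,
    coe_coe, Complex.conj_eq_iff_im, ← inner_conj_symm _ (T _), Complex.conj_im, neg_eq_zero]

end ContinuousLinearMap

namespace PVM

variable {Q : Type*} [MeasurableSpace Q] {H : Type*} [NormedAddCommGroup H]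
  [InnerProductSpace ℂ H] [CompleteSpace H] (P : PVM Q H)

theorem isSelfAdjoint_proj {B : Set Q} (hB : MeasurableSet B) : IsSelfAdjoint (P.proj B) :=
  isSelfAdjoint_iff'.mpr (P.sa B hB)

theorem proj_mul_proj {B B' : Set Q} (hB : MeasurableSet B) (hB' : MeasurableSet B') :
    P.proj B * P.proj B' = P.proj (B ∩ B') :=
  (P.inter B B' hB hB').symm

end PVM

/-- determinism criterion: For a bounded self-adjoint `H_I` and a PVM `P`
on configuration space `Q`, the following are equivalent:
(i) for all unit vectors `ψ` and all measurable `B, B' ⊆ Q`,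
    `Im ⟨ψ|P(B) H_I P(B')|ψ⟩ = 0` (all jump rates vanish);
(ii) `[H_I, P(B)] = 0` for all measurable `B ⊆ Q`. -/
theorem stmt5
    {Q : Type*} [MeasurableSpace Q] {H : Type*} [NormedAddCommGroup H]
    [InnerProductSpace ℂ H] [CompleteSpace H]
    (P : PVM Q H) (HI : H →L[ℂ] H) (hHIsa : ContinuousLinearMap.adjoint HI = HI) :
    (∀ ψ : H, ‖ψ‖ = 1 → ∀ B B' : Set Q, MeasurableSet B → MeasurableSet B' →
        (⟪ψ, P.proj B (HI (P.proj B' ψ))⟫_ℂ).im = 0)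
      ↔ (∀ B : Set Q, MeasurableSet B → HI ∘L P.proj B = P.proj B ∘L HI) := by
  have hHI : IsSelfAdjoint HI := isSelfAdjoint_iff'.mpr hHIsa
  constructor
  · intro h B hB
    have hsa : IsSelfAdjoint (HI * P.proj B) := by
      refine (isSelfAdjoint_iff_im_inner_map_self_eq_zero _).mpr
        (im_inner_map_self_eq_zero_of_norm_eq_one _ fun ψ hψ => ?_)
      simpa [P.univ'] using h ψ hψ Set.univ B MeasurableSet.univ hB
    exact (hHI.commute_iff (P.isSelfAdjoint_proj hB)).mpr hsa
  · intro h ψ _ B B' hB hB'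
    have hBB' := hB.inter hB'
    have hfactor : P.proj B * (HI * P.proj B') = P.proj (B ∩ B') * HI := by
      rw [show HI * P.proj B' = P.proj B' * HI from h B' hB', ← mul_assoc, P.proj_mul_proj hB hB']
    have hsa : IsSelfAdjoint (P.proj (B ∩ B') * HI) :=
      ((P.isSelfAdjoint_proj hBB').commute_iff hHI).mp (h _ hBB').symm
    rw [← hfactor] at hsa
    exact (isSelfAdjoint_iff_im_inner_map_self_eq_zero _).mp hsa ψ
end

section
/- In the setting of the previous statement, for any projection P_E on H_E, the probability Prob_s(α) = ⟨Ψ_t(s)|(1_S ⊗ P_E)|Ψ_t(s)⟩ with Ψ_t(s) = e^{-iHt}(e^{iGs}ψ ⊗ φ) is independent of s ∈ ℝ. -/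
/-!
For `σ : ℝ` put `U σ = exp (i σ G) ⊗ 1`, a unitary because `G` is Hermitian. Then
`Ψ_t(σ) = E (U σ χ)` with `E = exp (-i t H)` and `χ = ψ ⊗ φ`. The hypotheses make `G ⊗ 1`
commute with `H`, so `U σ` commutes with `E`; it also commutes with `1 ⊗ P_E`. Hence
`Ψ_t(σ) = U σ (E χ)`, and since `U σ` commutes with `1 ⊗ P_E` and preserves the inner
product, `⟨Ψ_t(σ), (1 ⊗ P_E) Ψ_t(σ)⟩ = ⟨E χ, (1 ⊗ P_E) E χ⟩` does not depend on `σ`.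
-/

open Kronecker Matrix NormedSpace

namespace Matrix

variable {k m n R : Type*} [Fintype k] [Fintype m] [Fintype n]

theorem _root_.Commute.kronecker [CommSemiring R] {A B : Matrix m m R} {C D : Matrix n n R}
    (hAB : Commute A B) (hCD : Commute C D) : Commute (A ⊗ₖ C) (B ⊗ₖ D) := by
  simp only [Commute, SemiconjBy, ← mul_kronecker_mul, hAB.eq, hCD.eq]

theorem kronecker_one_mulVec [CommSemiring R] [DecidableEq n] (A : Matrix m m R) (ψ : m → R)
    (φ : n → R) :
    (A ⊗ₖ (1 : Matrix n n R)) *ᵥ (fun p => ψ p.1 * φ p.2) = fun p => (A *ᵥ ψ) p.1 * φ p.2 := by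
  ext ⟨i, j⟩
  simp [mulVec, dotProduct, Fintype.sum_prod_type, one_apply, Finset.sum_mul, mul_assoc]

variable [CommRing R] [StarRing R] [DecidableEq k]

theorem star_mulVec_dotProduct_mulVec_of_mem_unitary {U : Matrix k k R}
    (hU : U ∈ unitary (Matrix k k R)) (v w : k → R) :
    star (U *ᵥ v) ⬝ᵥ (U *ᵥ w) = star v ⬝ᵥ w := by
  rw [star_mulVec, ← dotProduct_mulVec, mulVec_mulVec, ← star_eq_conjTranspose,
    Unitary.star_mul_self_of_mem hU, one_mulVec]

theorem star_mulVec_dotProduct_mulVec_mulVec_of_commute {U E N : Matrix k k R}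
    (hU : U ∈ unitary (Matrix k k R)) (hUE : Commute U E) (hUN : Commute U N) (v : k → R) :
    star (E *ᵥ U *ᵥ v) ⬝ᵥ (N *ᵥ E *ᵥ U *ᵥ v) = star (E *ᵥ v) ⬝ᵥ (N *ᵥ E *ᵥ v) := by
  have mulVec_comm {A : Matrix k k R} (h : Commute U A) (w : k → R) :
      A *ᵥ U *ᵥ w = U *ᵥ A *ᵥ w := by
    rw [mulVec_mulVec, ← h.eq, ← mulVec_mulVec]
  rw [mulVec_comm hUE, mulVec_comm hUN, star_mulVec_dotProduct_mulVec_of_mem_unitary hU]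

section Exp

variable {𝕜 : Type*} [RCLike 𝕜]

attribute [local instance] Matrix.linftyOpNormedRing Matrix.linftyOpNormedAlgebra

theorem exp_kronecker_one [DecidableEq m] [DecidableEq n] (A : Matrix m m 𝕜) :
    exp (A ⊗ₖ (1 : Matrix n n 𝕜)) = exp A ⊗ₖ 1 := by
  rw [kronecker_one, kronecker_one]
  exact (map_exp ((blockDiagonalRingHom m n 𝕜).comp (Pi.constRingHom n _))
    ((continuous_pi fun _ => continuous_id).matrix_blockDiagonal) A).symm

theorem exp_mem_unitary_of_mem_skewAdjoint {A : Matrix k k 𝕜}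
    (hA : A ∈ skewAdjoint (Matrix k k 𝕜)) : exp A ∈ unitary (Matrix k k 𝕜) := by
  rw [Unitary.mem_iff, star_eq_conjTranspose, ← exp_conjTranspose, ← star_eq_conjTranspose,
    skewAdjoint.mem_iff.mp hA, ← exp_add_of_commute _ _ (Commute.refl A).neg_left,
    ← exp_add_of_commute _ _ (Commute.refl A).neg_right, neg_add_cancel, add_neg_cancel,
    exp_zero, and_self]

end Exp

end Matrix

theorem stmt14_general
    {m n : Type*} [Fintype m] [DecidableEq m] [Fintype n] [DecidableEq n]
    (HS G : Matrix m m ℂ) (HE : Matrix n n ℂ)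
    (Hint : Matrix (m × n) (m × n) ℂ)
    (hGsa : G.IsHermitian)
    (hGHS : G * HS = HS * G)
    (hGHint : (G ⊗ₖ (1 : Matrix n n ℂ)) * Hint = Hint * (G ⊗ₖ (1 : Matrix n n ℂ)))
    (Htot : Matrix (m × n) (m × n) ℂ)
    (hHtot : Htot = HS ⊗ₖ (1 : Matrix n n ℂ) + (1 : Matrix m m ℂ) ⊗ₖ HE + Hint)
    (PE : Matrix n n ℂ)
    (ψ : m → ℂ)
    (φ : n → ℂ)
    (t : ℝ) :
    ∀ s s' : ℝ,
      (let Ψ : ℝ → (m × n → ℂ) := fun σ =>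
        (NormedSpace.exp ((-(Complex.I * (t : ℂ))) • Htot)).mulVec
          (fun p => ((NormedSpace.exp ((Complex.I * (σ : ℂ)) • G)).mulVec ψ) p.1 * φ p.2);
      ∑ p, (starRingEnd ℂ) (Ψ s p) *
          (((1 : Matrix m m ℂ) ⊗ₖ PE).mulVec (Ψ s)) p
        = ∑ p, (starRingEnd ℂ) (Ψ s' p) *
          (((1 : Matrix m m ℂ) ⊗ₖ PE).mulVec (Ψ s')) p) := by
  intro s s'
  set E := exp ((-(Complex.I * (t : ℂ))) • Htot)
  set N := (1 : Matrix m m ℂ) ⊗ₖ PE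
  have hGHtot : Commute (G ⊗ₖ (1 : Matrix n n ℂ)) Htot := hHtot ▸
    ((Commute.kronecker hGHS (.refl 1)).add_right
      ((Commute.one_right G).kronecker (.one_left HE))).add_right hGHint
  have key (σ : ℝ) : star (E *ᵥ fun p => (exp ((Complex.I * σ) • G) *ᵥ ψ) p.1 * φ p.2) ⬝ᵥ
      (N *ᵥ E *ᵥ fun p => (exp ((Complex.I * σ) • G) *ᵥ ψ) p.1 * φ p.2) =
      star (E *ᵥ fun p => ψ p.1 * φ p.2) ⬝ᵥ (N *ᵥ E *ᵥ fun p => ψ p.1 * φ p.2) := by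
    have hU : exp ((Complex.I * σ) • G) ∈ unitary (Matrix m m ℂ) :=
      Matrix.exp_mem_unitary_of_mem_skewAdjoint <|
        hGsa.isSelfAdjoint.smul_mem_skewAdjoint <| by simp [skewAdjoint.mem_iff]
    have hUE : Commute (exp ((Complex.I * σ) • G) ⊗ₖ (1 : Matrix n n ℂ)) E := by
      rw [← exp_kronecker_one, smul_kronecker]
      exact ((hGHtot.smul_left _).smul_right _).exp
    rw [← kronecker_one_mulVec]
    exact star_mulVec_dotProduct_mulVec_mulVec_of_commute (kronecker_mem_unitary hU (one_mem _))
      hUE ((Commute.one_right _).kronecker (.one_left PE)) _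
  exact (key s).trans (key s').symm

/-- In the setting of Statement 13 (`Htot = HS ⊗ 1 + 1 ⊗ HE + Hint`,
`[G, HS] = 0`, `[G ⊗ 1, Hint] = 0`, `ψ`, `φ` unit vectors), for any orthogonal
projection `PE` on `H_E`, the probability
`Prob_s(α) = ⟨Ψ_t(s)|(1 ⊗ PE)|Ψ_t(s)⟩` with `Ψ_t(s) = e^{-iHt}(e^{iGs}ψ ⊗ φ)`
is independent of `s ∈ ℝ`. -/
theorem stmt14
    {m n : Type*} [Fintype m] [DecidableEq m] [Fintype n] [DecidableEq n]
    (HS G : Matrix m m ℂ) (HE : Matrix n n ℂ)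
    (Hint : Matrix (m × n) (m × n) ℂ)
    (hHSsa : HS.IsHermitian) (hHEsa : HE.IsHermitian) (hHintsa : Hint.IsHermitian)
    (hGsa : G.IsHermitian)
    (hGHS : G * HS = HS * G)
    (hGHint : (G ⊗ₖ (1 : Matrix n n ℂ)) * Hint = Hint * (G ⊗ₖ (1 : Matrix n n ℂ)))
    (Htot : Matrix (m × n) (m × n) ℂ)
    (hHtot : Htot = HS ⊗ₖ (1 : Matrix n n ℂ) + (1 : Matrix m m ℂ) ⊗ₖ HE + Hint)
    (PE : Matrix n n ℂ) (hPEproj : PE * PE = PE) (hPEsa : PE.IsHermitian)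
    (ψ : m → ℂ) (hψ : ∑ i, ‖ψ i‖ ^ 2 = 1)
    (φ : n → ℂ) (hφ : ∑ j, ‖φ j‖ ^ 2 = 1)
    (t : ℝ) :
    ∀ s s' : ℝ,
      (let Ψ : ℝ → (m × n → ℂ) := fun σ =>
        (NormedSpace.exp ((-(Complex.I * (t : ℂ))) • Htot)).mulVec
          (fun p => ((NormedSpace.exp ((Complex.I * (σ : ℂ)) • G)).mulVec ψ) p.1 * φ p.2);
      ∑ p, (starRingEnd ℂ) (Ψ s p) *
          (((1 : Matrix m m ℂ) ⊗ₖ PE).mulVec (Ψ s)) p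
        = ∑ p, (starRingEnd ℂ) (Ψ s' p) *
          (((1 : Matrix m m ℂ) ⊗ₖ PE).mulVec (Ψ s')) p) :=
  stmt14_general HS G HE Hint hGsa hGHS hGHint Htot hHtot PE ψ φ t
end
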